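/- Let G=(V,E) be a finite simple graph, S ⊆ V, uv ∈ E an edge, and r,s ∈ {0,1}. Then, up to a global phase in {+1,−1}, 2 · ⟨s^{(π/2)}|_u ⟨r^{(π/2)}|_v |G;S⟩ = |(G∧uv)∖u∖v; S'⟩, where S' = (S∖{u,v}) Δ (N(u)∩N(v)) Δ (N(u)∖{v})^{r⊕[v∈S]} Δ (N(v)∖{u})^{s⊕[u∈S]}, with A^ε denoting A if ε=1 and ∅ if ε=0, [w∈S] being 1 if w∈S and 0 otherwise, ⊕ addition mod 2, Δ symmetric difference, and N(w) the neighborhood of w in G. -/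

import Mathlib

/-- Local complementation `G*u`. -/
def localComp {V : Type*} (G : SimpleGraph V) (u : V) : SimpleGraph V where
  Adj x y := x ≠ y ∧ Xor' (G.Adj x y) (G.Adj u x ∧ G.Adj u y)
  symm := by
    constructor
    rintro x y ⟨hxy, h⟩
    refine ⟨hxy.symm, ?_⟩
    rw [G.adj_comm y x, and_comm]
    exact h
  loopless := by constructor; rintro x ⟨h, -⟩; exact h rfl

/-- Pivoting (edge local complementation): `G∧uv = G*u*v*u`. -/
def pivot {V : Type*} (G : SimpleGraph V) (u v : V) : SimpleGraph V :=
  localComp (localComp (localComp G u) v) u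

instance {V : Type*} [DecidableEq V] (G : SimpleGraph V) [DecidableRel G.Adj] (u : V) :
    DecidableRel (localComp G u).Adj :=
  fun x y => by unfold localComp Xor'; infer_instance

instance {V : Type*} [DecidableEq V] (G : SimpleGraph V) [DecidableRel G.Adj] (u v : V) :
    DecidableRel (pivot G u v).Adj := by unfold pivot; infer_instance

noncomputable section

/-- The state space of qubits indexed by `V`: ℂ^{2^|V|}, given by amplitudes on the
computational basis states `|x⟩`, `x : V → Bool`. -/
abbrev QState (V : Type*) := (V → Bool) → ℂ

variable {V : Type*} [Fintype V] [DecidableEq V]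

/-- The Pauli operator `Z_S = ∏_{u∈S} Z_u`: `Z_S |x⟩ = (-1)^{|S ∩ supp x|} |x⟩`. -/
def Zop (S : Finset V) (ψ : QState V) : QState V :=
  fun x => (-1 : ℂ) ^ (S.filter (fun u => x u = true)).card * ψ x

/-- The Pauli operator `X_u`: flips qubit `u`. -/
def Xop (u : V) (ψ : QState V) : QState V :=
  fun x => ψ (Function.update x u (!x u))

/-- `q(x)`: the number of edges of `G` with both endpoints in the support of `x`. -/
def qVal (G : SimpleGraph V) [DecidableRel G.Adj] (x : V → Bool) : ℕ :=
  (G.edgeFinset.filter (fun e => ∀ v ∈ e, x v = true)).card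

/-- The graph state `|G⟩ = 2^{-n/2} ∑_x (-1)^{q(x)} |x⟩`. -/
def graphState (G : SimpleGraph V) [DecidableRel G.Adj] : QState V :=
  fun x => (-1 : ℂ) ^ qVal G x / (Real.sqrt (2 ^ Fintype.card V) : ℂ)

/-- The signed graph state `|G;S⟩ = Z_S |G⟩`. -/
def sgState (G : SimpleGraph V) [DecidableRel G.Adj] (S : Finset V) : QState V :=
  Zop S (graphState G)

/-- Decidability of adjacency for graphs pulled back along a map (e.g. induced subgraphs
on a subtype, modelling vertex deletion). -/
instance {V W : Type*} (G : SimpleGraph V) [DecidableRel G.Adj] (f : W → V) :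
    DecidableRel ((G.comap f).Adj) :=
  fun a b => inferInstanceAs (Decidable (G.Adj (f a) (f b)))

/-- The X-measurement bra `⟨s^{(π/2)}|`: `|0^{(π/2)}⟩ = (|0⟩+|1⟩)/√2`,
`|1^{(π/2)}⟩ = (|0⟩−|1⟩)/√2`. -/
noncomputable def xVec (s : Bool) : Bool → ℂ :=
  fun b => if s && b then -(Real.sqrt 2 : ℂ)⁻¹ else (Real.sqrt 2 : ℂ)⁻¹

/-- Partial inner product `⟨β|_u ⟨γ|_v |ψ⟩` contracting qubits `u` and `v` with the
single-qubit bras `β` and `γ`, yielding an (unnormalized) state on `V∖{u,v}`. -/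
def contract2 {V : Type*} [DecidableEq V] (u v : V) (β γ : Bool → ℂ) (ψ : QState V) :
    QState {w : V // w ≠ u ∧ w ≠ v} :=
  fun x => ∑ a : Bool, ∑ b : Bool, starRingEnd ℂ (β a) * starRingEnd ℂ (γ b) *
    ψ (fun w => if h1 : w = u then a else if h2 : w = v then b else x ⟨w, h1, h2⟩)

end

/-!
Write a computational basis state of `V` as `x` on `V ∖ {u, v}` together with bits `a` at `u`
and `b` at `v`. Every amplitude of a signed graph state is `±2^{-n/2}`, with sign `(-1)^q` for
a quadratic form `q` over `𝔽₂`. Let `α`, `β`, `γ` be the parities of `|N(u) ∩ supp x|`,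
`|N(v) ∩ supp x|` and `|N(u) ∩ N(v) ∩ supp x|`. Contracting `|G;S⟩` with the X-basis bras gives
at `x` a multiple of `∑_{a,b} (-1)^{c + a A + b B + a b}`, where `c` is the form of
`|G∖u∖v; S∖{u,v}⟩` at `x`, `A = s + [u ∈ S] + α` and `B = r + [v ∈ S] + β`; the Gauss sum
`∑_{a,b} (-1)^{a A + b B + a b} = 2 (-1)^{A B}` evaluates it. Pivoting on `uv` toggles the edge
`kl` of `G ∖ u ∖ v` iff `[k ~ u][l ~ v] + [k ~ v][l ~ u] = 1`, which adds `α β + γ` to the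
form, and expanding `A B` shows that the two sides differ by the constant sign
`(-1)^{(s + [u ∈ S]) (r + [v ∈ S])}`.
-/

open Finset

def bit (P : Prop) [Decidable P] : ZMod 2 := if P then 1 else 0

def negOnePow (t : ZMod 2) : ℂ := (-1) ^ t.val

section Bits

@[simp] lemma bit_pos {P : Prop} [Decidable P] (h : P) : bit P = 1 := if_pos h

@[simp] lemma bit_neg {P : Prop} [Decidable P] (h : ¬P) : bit P = 0 := if_neg h

lemma bit_mul_self (P : Prop) [Decidable P] : bit P * bit P = bit P := by
  by_cases hP : P <;> simp [hP]

lemma bit_and (P Q : Prop) [Decidable P] [Decidable Q] : bit (P ∧ Q) = bit P * bit Q := by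
  by_cases hP : P <;> by_cases hQ : Q <;> simp [hP, hQ]

lemma bit_xor (a b : Bool) : bit (xor a b) = bit a + bit b := by
  cases a <;> cases b <;> simp [CharTwo.add_self_eq_zero]

lemma bit_mem_symmDiff {α : Type*} [DecidableEq α] (T T' : Finset α) (a : α) :
    bit (a ∈ symmDiff T T') = bit (a ∈ T) + bit (a ∈ T') := by
  by_cases h : a ∈ T <;> by_cases h' : a ∈ T' <;>
    simp [mem_symmDiff, h, h', CharTwo.add_self_eq_zero]

lemma natCast_card_filter_eq_sum_bit {W : Type*} [Fintype W] [DecidableEq W] (S : Finset W)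
    (y : W → Bool) :
    ((S.filter fun w => y w = true).card : ZMod 2) = ∑ w, bit (w ∈ S) * bit (y w) := by
  simp only [natCast_card_filter, bit, ite_mul, one_mul, zero_mul, sum_ite_mem, univ_inter]

lemma zmod_two_eq_zero_or_one : ∀ t : ZMod 2, t = 0 ∨ t = 1 := by decide

@[simp] lemma negOnePow_zero : negOnePow 0 = 1 := by simp [negOnePow]

@[simp] lemma negOnePow_one : negOnePow 1 = -1 := by simp [negOnePow, ZMod.val_one]

lemma negOnePow_natCast (n : ℕ) : negOnePow n = (-1) ^ n := by
  rw [negOnePow, ZMod.val_natCast, ← neg_one_pow_eq_pow_mod_two]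

lemma negOnePow_add (a b : ZMod 2) : negOnePow (a + b) = negOnePow a * negOnePow b := by
  rw [← ZMod.natCast_zmod_val a, ← ZMod.natCast_zmod_val b, ← Nat.cast_add, negOnePow_natCast,
    negOnePow_natCast, negOnePow_natCast, pow_add]

lemma negOnePow_mem (t : ZMod 2) : negOnePow t ∈ ({1, -1} : Set ℂ) := by
  rcases zmod_two_eq_zero_or_one t with rfl | rfl <;> simp

lemma sum_bool_negOnePow (c A B : ZMod 2) :
    ∑ a : Bool, ∑ b : Bool, negOnePow (c + bit a * A + bit b * B + bit a * bit b) =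
      2 * negOnePow (c + A * B) := by
  simp only [Fintype.sum_bool, bit_pos, negOnePow_add]
  rcases zmod_two_eq_zero_or_one A with rfl | rfl <;>
    rcases zmod_two_eq_zero_or_one B with rfl | rfl <;> simp <;> ring

end Bits

section OrderedPairs

lemma ite_lt_add_ite_lt {V R : Type*} [LinearOrder V] [AddCommMonoid R] {i j : V} (hij : i ≠ j)
    (e : V → V → R) (he : e i j = e j i) :
    ((if i < j then e i j else 0) + if j < i then e j i else 0) = e i j := by
  rcases hij.lt_or_gt with h | h
  · simp [h, h.not_gt]
  · simp [h, h.not_gt, he]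

lemma sum_mul_sum_eq_sum_sum_ite_lt_add {W R : Type*} [Fintype W] [LinearOrder W]
    [CommSemiring R] (f g : W → R) :
    (∑ k, f k) * (∑ l, g l) =
      ∑ k, ∑ l, (if k < l then f k * g l + g k * f l else 0) + ∑ k, f k * g k := by
  have hsplit : ∀ k l, f k * g l = (if k < l then f k * g l else 0) +
      (if l < k then f k * g l else 0) + (if k = l then f k * g l else 0) := by
    intro k l
    rcases lt_trichotomy k l with h | rfl | h
    · simp [h, h.not_gt, h.ne]
    · simp
    · simp [h, h.not_gt, h.ne']
  rw [sum_mul_sum, sum_congr rfl fun k _ => sum_congr rfl fun l _ => hsplit k l]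
  simp only [sum_add_distrib, sum_ite_eq, mem_univ, if_true]
  rw [sum_comm (f := fun k l => if l < k then f k * g l else 0)]
  simp only [mul_comm (f _) (g _), ← sum_add_distrib, ← ite_add_zero]

variable {V R : Type*} [Fintype V] [DecidableEq V] [AddCommMonoid R] {u v : V}

lemma sum_eq_add_add_sum_ne_ne (huv : u ≠ v) (F : V → R) :
    ∑ i, F i = F u + F v + ∑ k : {w : V // w ≠ u ∧ w ≠ v}, F k := by
  rw [← sum_add_sum_compl {u, v} F, sum_pair huv]
  congr 1
  exact sum_subtype (p := fun w => w ≠ u ∧ w ≠ v) _ (fun w => by simp) F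

lemma sum_sum_ite_lt_eq_add_add_sum [LinearOrder V] (huv : u ≠ v) (e : V → V → R)
    (he : ∀ i j, e i j = e j i) :
    ∑ i, ∑ j, (if i < j then e i j else 0) =
      e u v + ∑ k : {w : V // w ≠ u ∧ w ≠ v}, (e u k + e v k) +
        ∑ k : {w : V // w ≠ u ∧ w ≠ v}, ∑ l : {w : V // w ≠ u ∧ w ≠ v},
          if k < l then e k l else 0 := by
  set T : V → V → R := fun i j => if i < j then e i j else 0 with hT
  have hpair : ∀ i j, i ≠ j → T i j + T j i = e i j :=
    fun i j hij => ite_lt_add_ite_lt hij e (he i j)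
  calc ∑ i, ∑ j, T i j
      = (T u u + T u v + ∑ l : {w : V // w ≠ u ∧ w ≠ v}, T u l) +
          (T v u + T v v + ∑ l : {w : V // w ≠ u ∧ w ≠ v}, T v l) +
          ∑ k : {w : V // w ≠ u ∧ w ≠ v},
            (T k u + T k v + ∑ l : {w : V // w ≠ u ∧ w ≠ v}, T k l) := by
        simp only [sum_eq_add_add_sum_ne_ne huv]
    _ = (T u v + T v u) +
          ∑ k : {w : V // w ≠ u ∧ w ≠ v}, ((T u k + T k u) + (T v k + T k v)) +
          ∑ k : {w : V // w ≠ u ∧ w ≠ v}, ∑ l : {w : V // w ≠ u ∧ w ≠ v}, T k l := by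
        simp only [hT, lt_irrefl, if_false, sum_add_distrib]
        abel
    _ = _ := by
        rw [hpair u v huv]
        congr 2
        exact sum_congr rfl fun k _ => by
          rw [hpair u k (Ne.symm k.2.1), hpair v k (Ne.symm k.2.2)]

end OrderedPairs

section GraphStates

variable {W : Type*} [Fintype W] [DecidableEq W]

lemma natCast_qVal_eq_sum_lt [LinearOrder W] (H : SimpleGraph W) [DecidableRel H.Adj]
    (y : W → Bool) :
    (qVal H y : ZMod 2) =
      ∑ i, ∑ j, if i < j then bit (H.Adj i j) * bit (y i) * bit (y j) else 0 := by
  -- `sum_sym2_filter_not_isDiag` is stated for the order's decidable equality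
  obtain rfl : ‹DecidableEq W› = LinearOrder.toDecidableEq := Subsingleton.elim _ _
  have hE : H.edgeFinset.filter (fun e => ∀ w ∈ e, y w = true) =
      (univ.sym2.filter fun e => ¬e.IsDiag).filter
        (fun e => e ∈ H.edgeSet ∧ ∀ w ∈ e, y w = true) := by
    ext e
    simp only [mem_filter, SimpleGraph.mem_edgeFinset, mem_sym2_iff, mem_univ, implies_true,
      true_and]
    exact ⟨fun ⟨he, hy⟩ => ⟨H.not_isDiag_of_mem_edgeSet he, he, hy⟩,
      fun ⟨_, he, hy⟩ => ⟨he, hy⟩⟩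
  rw [qVal, hE, natCast_card_filter, sum_sym2_filter_not_isDiag, sum_filter,
    sum_subset (subset_univ _) fun a _ ha => if_neg fun h => ha (by simpa using h.ne),
    Fintype.sum_prod_type]
  refine sum_congr rfl fun i _ => sum_congr rfl fun j _ => ?_
  by_cases hij : i < j
  · simp only [if_pos hij, SimpleGraph.mem_edgeSet, Sym2.mem_iff, forall_eq_or_imp, forall_eq]
    rw [← bit_and, ← bit_and, bit]
    simp only [and_assoc]
  · simp [hij]

lemma sgState_apply (G : SimpleGraph W) [DecidableRel G.Adj] (S : Finset W) (y : W → Bool) :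
    sgState G S y = negOnePow (∑ w, bit (w ∈ S) * bit (y w) + qVal G y) /
      (Real.sqrt (2 ^ Fintype.card W) : ℂ) := by
  rw [sgState, Zop, graphState, negOnePow_add, ← natCast_card_filter_eq_sum_bit,
    negOnePow_natCast, negOnePow_natCast, mul_div_assoc]

end GraphStates

section Restriction

variable {V : Type*} [DecidableEq V] {u v : V}

def extendUV (u v : V) (x : {w : V // w ≠ u ∧ w ≠ v} → Bool) (a b : Bool) : V → Bool :=
  fun w => if h1 : w = u then a else if h2 : w = v then b else x ⟨w, h1, h2⟩

variable (x : {w : V // w ≠ u ∧ w ≠ v} → Bool) (a b : Bool)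

@[simp] lemma extendUV_left : extendUV u v x a b u = a := by simp [extendUV]

@[simp] lemma extendUV_right (huv : u ≠ v) : extendUV u v x a b v = b := by
  simp [extendUV, huv.symm]

@[simp] lemma extendUV_val (k : {w : V // w ≠ u ∧ w ≠ v}) : extendUV u v x a b k = x k := by
  simp [extendUV, k.2.1, k.2.2]

variable [Fintype V]

def restParity (T : Finset V) (x : {w : V // w ≠ u ∧ w ≠ v} → Bool) : ZMod 2 :=
  ∑ k, bit (k.1 ∈ T) * bit (x k)

lemma sum_bit_mul_extendUV (huv : u ≠ v) (S : Finset V) :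
    ∑ w, bit (w ∈ S) * bit (extendUV u v x a b w) =
      restParity S x + bit a * bit (u ∈ S) + bit b * bit (v ∈ S) := by
  rw [sum_eq_add_add_sum_ne_ne huv, extendUV_left, extendUV_right _ _ _ huv, restParity]
  simp only [extendUV_val]
  ring

lemma sum_bit_mem_filter_val (T : Finset V) :
    ∑ k, bit (k ∈ univ.filter fun w : {w : V // w ≠ u ∧ w ≠ v} => w.1 ∈ T) * bit (x k) =
      restParity T x := by
  simp only [mem_filter, mem_univ, true_and, restParity]

lemma restParity_symmDiff (T T' : Finset V) :
    restParity (symmDiff T T') x = restParity T x + restParity T' x := by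
  simp only [restParity, bit_mem_symmDiff, add_mul, sum_add_distrib]

lemma restParity_erase_left (T : Finset V) : restParity (T.erase u) x = restParity T x :=
  sum_congr rfl fun k _ => by simp only [mem_erase, k.2.1, ne_eq, not_false_eq_true, true_and]

lemma restParity_erase_right (T : Finset V) : restParity (T.erase v) x = restParity T x :=
  sum_congr rfl fun k _ => by simp only [mem_erase, k.2.2, ne_eq, not_false_eq_true, true_and]

lemma restParity_ite_empty (c : Bool) (T : Finset V) :
    restParity (if c then T else ∅) x = bit c * restParity T x := by
  cases c <;> simp [restParity]

lemma sqrt_two_pow_card_eq_two_mul (huv : u ≠ v) :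
    (Real.sqrt (2 ^ Fintype.card V) : ℂ) =
      2 * (Real.sqrt (2 ^ Fintype.card {w : V // w ≠ u ∧ w ≠ v}) : ℂ) := by
  have hcard : Fintype.card V = Fintype.card {w : V // w ≠ u ∧ w ≠ v} + 2 := by
    rw [Fintype.card_subtype, ← card_pair huv, ← card_compl_add_card {u, v}]
    congr 2
    ext w
    simp
  rw [hcard, pow_add, Real.sqrt_mul (by positivity), show (2 : ℝ) ^ 2 = 2 * 2 by norm_num,
    Real.sqrt_mul_self zero_le_two]
  push_cast
  ring

end Restriction

section Pivot

variable {V : Type*} (G : SimpleGraph V) {u v : V}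

lemma localComp_adj {w i j : V} :
    (localComp G w).Adj i j ↔ i ≠ j ∧ Xor (G.Adj i j) (G.Adj w i ∧ G.Adj w j) :=
  Iff.rfl

variable [DecidableEq V] [DecidableRel G.Adj]

lemma bit_localComp_adj (w : V) {i j : V} (hij : i ≠ j) :
    bit ((localComp G w).Adj i j) = bit (G.Adj i j) + bit (G.Adj w i) * bit (G.Adj w j) := by
  by_cases h1 : G.Adj i j <;> by_cases h2 : G.Adj w i <;> by_cases h3 : G.Adj w j <;>
    simp [localComp_adj, hij, h1, h2, h3, xor_def, CharTwo.add_self_eq_zero]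

lemma bit_pivot_adj (huv : G.Adj u v) (k l : {w : V // w ≠ u ∧ w ≠ v}) :
    bit ((pivot G u v).Adj k l) = bit (G.Adj k l) +
      bit (G.Adj u k) * bit (G.Adj v l) + bit (G.Adj v k) * bit (G.Adj u l) := by
  obtain ⟨k, hku, hkv⟩ := k
  obtain ⟨l, hlu, hlv⟩ := l
  by_cases hkl : k = l
  · subst hkl
    rw [bit_neg ((pivot G u v).irrefl), bit_neg (G.irrefl), zero_add, mul_comm,
      CharTwo.add_self_eq_zero]
  simp only [pivot, bit_localComp_adj _ _ hkl, bit_localComp_adj _ _ hku.symm,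
    bit_localComp_adj _ _ hlu.symm, bit_localComp_adj _ _ hkv.symm,
    bit_localComp_adj _ _ hlv.symm, bit_localComp_adj _ _ huv.ne.symm, bit_pos huv,
    bit_pos huv.symm, SimpleGraph.irrefl, not_false_eq_true, bit_neg]
  ring_nf
  reduce_mod_char

variable [Fintype V]

lemma natCast_qVal_extendUV (huv : G.Adj u v) (x : {w : V // w ≠ u ∧ w ≠ v} → Bool)
    (a b : Bool) :
    (qVal G (extendUV u v x a b) : ZMod 2) =
      qVal (G.comap Subtype.val) x + bit a * restParity (G.neighborFinset u) x +
        bit b * restParity (G.neighborFinset v) x + bit a * bit b := by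
  let : LinearOrder V := LinearOrder.lift' _ (Fintype.equivFin V).injective
  rw [natCast_qVal_eq_sum_lt, natCast_qVal_eq_sum_lt,
    sum_sum_ite_lt_eq_add_add_sum huv.ne _ fun i j => by simp only [G.adj_comm i j]; ring]
  simp only [extendUV_left, extendUV_right _ _ _ huv.ne, extendUV_val, restParity,
    SimpleGraph.comap_adj, SimpleGraph.mem_neighborFinset, bit_pos huv, sum_add_distrib,
    mul_sum]
  ring_nf

lemma natCast_qVal_pivot_comap (huv : G.Adj u v) (x : {w : V // w ≠ u ∧ w ≠ v} → Bool) :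
    (qVal ((pivot G u v).comap Subtype.val) x : ZMod 2) =
      qVal (G.comap Subtype.val) x +
        restParity (G.neighborFinset u) x * restParity (G.neighborFinset v) x +
        restParity (G.neighborFinset u ∩ G.neighborFinset v) x := by
  let : LinearOrder V := LinearOrder.lift' _ (Fintype.equivFin V).injective
  set f : {w : V // w ≠ u ∧ w ≠ v} → ZMod 2 := fun k => bit (G.Adj u k) * bit (x k)
  set g : {w : V // w ≠ u ∧ w ≠ v} → ZMod 2 := fun k => bit (G.Adj v k) * bit (x k)
  have hf : restParity (G.neighborFinset u) x = ∑ k, f k := by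
    simp only [restParity, SimpleGraph.mem_neighborFinset, f]
  have hg : restParity (G.neighborFinset v) x = ∑ k, g k := by
    simp only [restParity, SimpleGraph.mem_neighborFinset, g]
  have hfg : restParity (G.neighborFinset u ∩ G.neighborFinset v) x = ∑ k, f k * g k := by
    refine sum_congr rfl fun k _ => ?_
    simp only [mem_inter, SimpleGraph.mem_neighborFinset, bit_and, f, g]
    linear_combination -(bit (G.Adj u k) * bit (G.Adj v k)) * bit_mul_self (x k)
  have hsplit : ∀ k l,
      bit (((pivot G u v).comap Subtype.val).Adj k l) * bit (x k) * bit (x l) =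
        bit ((G.comap Subtype.val).Adj k l) * bit (x k) * bit (x l) +
          (f k * g l + g k * f l) := by
    intro k l
    simp only [SimpleGraph.comap_adj, bit_pivot_adj G huv, f, g]
    ring
  rw [natCast_qVal_eq_sum_lt, natCast_qVal_eq_sum_lt, hf, hg, hfg,
    sum_mul_sum_eq_sum_sum_ite_lt_add f g]
  simp only [hsplit, ite_add_zero, sum_add_distrib]
  linear_combination -CharTwo.add_self_eq_zero (∑ k, f k * g k)

lemma sgState_extendUV_apply (huv : G.Adj u v) (S : Finset V)
    (x : {w : V // w ≠ u ∧ w ≠ v} → Bool) (a b : Bool) :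
    sgState G S (extendUV u v x a b) =
      negOnePow (restParity S x + qVal (G.comap Subtype.val) x +
          bit a * (bit (u ∈ S) + restParity (G.neighborFinset u) x) +
          bit b * (bit (v ∈ S) + restParity (G.neighborFinset v) x) + bit a * bit b) /
        (2 * Real.sqrt (2 ^ Fintype.card {w : V // w ≠ u ∧ w ≠ v}) : ℂ) := by
  rw [sgState_apply, sum_bit_mul_extendUV _ _ _ huv.ne, natCast_qVal_extendUV G huv,
    sqrt_two_pow_card_eq_two_mul huv.ne]
  ring_nf

end Pivot

section Measurement

variable {V : Type*} [DecidableEq V] {u v : V}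

lemma conj_xVec (t a : Bool) :
    starRingEnd ℂ (xVec t a) = negOnePow (bit t * bit a) / (Real.sqrt 2 : ℂ) := by
  cases t <;> cases a <;> simp [xVec, Complex.conj_ofReal, div_eq_mul_inv]

lemma contract2_xVec_apply (s r : Bool) (ψ : QState V) (x : {w : V // w ≠ u ∧ w ≠ v} → Bool) :
    contract2 u v (xVec s) (xVec r) ψ x =
      2⁻¹ * ∑ a : Bool, ∑ b : Bool,
        negOnePow (bit s * bit a + bit r * bit b) * ψ (extendUV u v x a b) := by
  have hsqrt : (Real.sqrt 2 : ℂ) ^ 2 = 2 := by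
    rw [← Complex.ofReal_pow, Real.sq_sqrt zero_le_two, Complex.ofReal_ofNat]
  simp only [contract2, conj_xVec, mul_sum, negOnePow_add]
  refine sum_congr rfl fun a _ => sum_congr rfl fun b _ => ?_
  field_simp
  rw [hsqrt]
  unfold extendUV
  ring

variable [Fintype V] (G : SimpleGraph V) [DecidableRel G.Adj]

lemma two_smul_contract2_xVec_sgState_apply (huv : G.Adj u v) (S : Finset V) (r s : Bool)
    (x : {w : V // w ≠ u ∧ w ≠ v} → Bool) :
    ((2 : ℂ) • contract2 u v (xVec s) (xVec r) (sgState G S)) x =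
      negOnePow (restParity S x + qVal (G.comap Subtype.val) x +
          (bit s + (bit (u ∈ S) + restParity (G.neighborFinset u) x)) *
            (bit r + (bit (v ∈ S) + restParity (G.neighborFinset v) x))) /
        (Real.sqrt (2 ^ Fintype.card {w : V // w ≠ u ∧ w ≠ v}) : ℂ) := by
  have hexp : ∀ (c A B : ZMod 2) (a b : Bool),
      bit s * bit a + bit r * bit b + (c + bit a * A + bit b * B + bit a * bit b) =
        c + bit a * (bit s + A) + bit b * (bit r + B) + bit a * bit b := by
    intros; ring
  rw [Pi.smul_apply, smul_eq_mul, contract2_xVec_apply]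
  simp only [sgState_extendUV_apply G huv, ← mul_div_assoc, ← negOnePow_add, ← sum_div, hexp,
    sum_bool_negOnePow]
  field_simp

end Measurement

/-- X-measurement of two adjacent qubits `u`, `v` of a signed graph state: up to a global
phase `ε ∈ {+1,−1}`, `2·⟨s^{(π/2)}|_u ⟨r^{(π/2)}|_v |G;S⟩ = |(G∧uv)∖u∖v; S'⟩` where
`S' = (S∖{u,v}) Δ (N(u)∩N(v)) Δ (N(u)∖{v})^{r⊕[v∈S]} Δ (N(v)∖{u})^{s⊕[u∈S]}`. -/
theorem xMeasure_pair_sgState {V : Type} [Fintype V] [DecidableEq V]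
    (G : SimpleGraph V) [DecidableRel G.Adj] (S : Finset V)
    (u v : V) (huv : G.Adj u v) (r s : Bool) :
    ∃ ε : ℂ, ε ∈ ({1, -1} : Set ℂ) ∧
      (2 : ℂ) • contract2 u v (xVec s) (xVec r) (sgState G S) =
        ε • sgState ((pivot G u v).comap (Subtype.val : {w : V // w ≠ u ∧ w ≠ v} → V))
          (Finset.univ.filter (fun w : {w : V // w ≠ u ∧ w ≠ v} =>
            w.1 ∈ symmDiff (symmDiff (symmDiff ((S.erase u).erase v)
              (G.neighborFinset u ∩ G.neighborFinset v))
              (if xor r (decide (v ∈ S)) then (G.neighborFinset u).erase v else ∅))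
              (if xor s (decide (u ∈ S)) then (G.neighborFinset v).erase u else ∅))) := by
  refine ⟨negOnePow ((bit s + bit (u ∈ S)) * (bit r + bit (v ∈ S))), negOnePow_mem _,
    funext fun x => ?_⟩
  rw [two_smul_contract2_xVec_sgState_apply G huv, Pi.smul_apply, smul_eq_mul, sgState_apply,
    sum_bit_mem_filter_val, natCast_qVal_pivot_comap G huv]
  simp only [restParity_symmDiff, restParity_erase_left, restParity_erase_right,
    restParity_ite_empty, bit_xor, decide_eq_true_eq]
  rw [← mul_div_assoc, ← negOnePow_add]
  congr 2
  linear_combination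
    -CharTwo.add_self_eq_zero (restParity (G.neighborFinset u ∩ G.neighborFinset v) x)
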